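/- Let K ≥ 1 and j ≥ 0 be integers, let a ∈ [0,1) and b > 0 be real numbers, and set p := ⌈a⌉, q := ⌊a + 2bK⌋, ω := a + 2bK − q (the fractional part of a + 2bK), and p₁ := q − p. Assume p < q. Then ∑_{m=p}^{q−1} I_{C₁}(K,j;a−m,b) = i · exp(2πi a K + 2πi b K²) · ∑_{l=0}^{j} i^l · binom(j,l) · J(K,l; p₁, ω, b). -/

import Mathlib

open scoped BigOperators

/-- `I_{C₁}(K,j;c,b)`: the contour integral of `z^j exp(2πi c z + 2πi b z²)`
along the vertical segment from `K` to `K+iK`. -/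
noncomputable def IC1 (K j : ℕ) (c b : ℝ) : ℂ :=
  Complex.I * ((K : ℂ) ^ j)⁻¹ *
    ∫ t in (0 : ℝ)..(K : ℝ), ((K : ℂ) + Complex.I * (t : ℂ)) ^ j *
      Complex.exp (2 * (Real.pi : ℂ) * Complex.I * (c : ℂ) *
          ((K : ℂ) + Complex.I * (t : ℂ)) +
        2 * (Real.pi : ℂ) * Complex.I * (b : ℂ) *
          ((K : ℂ) + Complex.I * (t : ℂ)) ^ 2)

/-- `J(K,l;M,w,b) = K^{-l} ∫_0^K t^l e^{-2πwt-2πibt²} (1 - e^{-2πMt})/(e^{2πt}-1) dt`. -/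
noncomputable def Jint (K l : ℕ) (M : ℤ) (w b : ℝ) : ℂ :=
  ((K : ℂ) ^ l)⁻¹ * ∫ t in (0 : ℝ)..(K : ℝ), (t : ℂ) ^ l *
    Complex.exp (-2 * (Real.pi : ℂ) * (w : ℂ) * (t : ℂ) -
      2 * (Real.pi : ℂ) * Complex.I * (b : ℂ) * (t : ℂ) ^ 2) *
    ((1 - Complex.exp (-2 * (Real.pi : ℂ) * (M : ℂ) * (t : ℂ))) /
      (Complex.exp (2 * (Real.pi : ℂ) * (t : ℂ)) - 1))

/-! Shifting the frequency `a` by an integer `m` multiplies the integrand on the segment `K + it`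
by `e^{-2π(q-m)t}`, up to the common factor `e^{2πi(aK + bK²)}`: the linear part `2bK` of the
phase is split as `q + ω`, and `e^{-2πimK} = 1`. Summing over `m` gives a finite geometric series,
equal to the kernel `(1 - e^{-2πp₁t})/(e^{2πt} - 1)` for `t > 0`, and the binomial expansion of
`(K + it)^j` splits the resulting integral into the `J`-integrals. -/

open Complex Finset Real

lemma sum_Ico_cexp_mul_sub_one (z : ℂ) {p q : ℤ} (h : p ≤ q) :
    (∑ m ∈ Ico p q, cexp (-((q - m) * z))) * (cexp z - 1) = 1 - cexp (-((q - p) * z)) := by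
  induction q, h using Int.leInduction with
  | base => simp
  | succ q hpq ih =>
    rw [← sum_Ico_add_eq_sum_Ico_add_one hpq]
    push_cast
    have hshift (m : ℤ) : cexp (-((q + 1 - m) * z)) = cexp (-z) * cexp (-((q - m) * z)) := by
      rw [← Complex.exp_add]; ring_nf
    have hinv : cexp (-z) * cexp z = 1 := by
      rw [← Complex.exp_add, neg_add_cancel, Complex.exp_zero]
    simp only [hshift, ← mul_sum, sub_self, zero_mul, neg_zero, Complex.exp_zero, mul_one]
    linear_combination cexp (-z) * ih + hinv

lemma sum_Ico_cexp_eq_div {z : ℂ} (hz : cexp z ≠ 1) {p q : ℤ} (h : p ≤ q) :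
    ∑ m ∈ Ico p q, cexp (-((q - m) * z)) = (1 - cexp (-((q - p) * z))) / (cexp z - 1) := by
  rw [eq_div_iff (sub_ne_zero.2 hz)]
  exact sum_Ico_cexp_mul_sub_one z h

lemma cexp_two_pi_mul_ne_one {t : ℝ} (ht : 0 < t) : cexp (2 * π * t) ≠ 1 := by
  rw [← ofReal_ofNat, ← ofReal_mul, ← ofReal_mul, ← ofReal_exp, ofReal_ne_one]
  exact (Real.one_lt_exp_iff.2 (by positivity)).ne'

lemma Jint_sub_eq_integral_sum_Ico (K l : ℕ) {p q : ℤ} (h : p ≤ q) (w b : ℝ) :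
    Jint K l (q - p) w b = ((K : ℂ) ^ l)⁻¹ * ∫ t in (0 : ℝ)..K, (t : ℂ) ^ l *
      (cexp (-2 * π * w * t - 2 * π * I * b * t ^ 2) *
        ∑ m ∈ Ico p q, cexp (-((q - m) * (2 * π * t)))) := by
  unfold Jint
  congr 1
  refine intervalIntegral.integral_congr_ae (.of_forall fun t ht => ?_)
  rw [Set.uIoc_of_le K.cast_nonneg] at ht
  rw [sum_Ico_cexp_eq_div (cexp_two_pi_mul_ne_one ht.1) h]
  push_cast
  ring_nf

lemma inv_pow_mul_integral_add_I_mul_pow {c : ℂ} (hc : c ≠ 0) (j : ℕ) {F : ℝ → ℂ}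
    (hF : Continuous F) (u v : ℝ) :
    (c ^ j)⁻¹ * ∫ t in u..v, (c + I * t) ^ j * F t =
      ∑ l ∈ range (j + 1), I ^ l * j.choose l * ((c ^ l)⁻¹ * ∫ t in u..v, (t : ℂ) ^ l * F t) := by
  simp_rw [add_comm c, add_pow, sum_mul]
  rw [intervalIntegral.integral_finsetSum
    fun l _ => (by fun_prop : Continuous _).intervalIntegrable _ _, mul_sum]
  refine sum_congr rfl fun l hl => ?_
  have hlj : l ≤ j := Nat.lt_succ_iff.mp (mem_range.mp hl)
  have hterm (t : ℝ) : (I * t) ^ l * c ^ (j - l) * j.choose l * F t =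
      (I ^ l * c ^ (j - l) * j.choose l) * ((t : ℂ) ^ l * F t) := by ring
  simp_rw [hterm, intervalIntegral.integral_const_mul, pow_sub₀ c hc hlj]
  field_simp

lemma cexp_quadratic_phase_add_I_mul (K m q : ℤ) {a b w : ℝ} (hw : w + q = a + 2 * b * K)
    (t : ℝ) :
    cexp (2 * π * I * ((a - m : ℝ) : ℂ) * (K + I * t) + 2 * π * I * b * (K + I * t) ^ 2) =
      cexp (2 * π * I * a * K + 2 * π * I * b * K ^ 2) *
        (cexp (-2 * π * w * t - 2 * π * I * b * t ^ 2) * cexp (-((q - m) * (2 * π * t)))) := by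
  have hwC : (w : ℂ) = a + 2 * b * K - q := by
    rw [eq_sub_iff_add_eq]; exact_mod_cast hw
  rw [← Complex.exp_add, ← Complex.exp_add, ← mul_one (cexp (_ + _)),
    ← exp_int_mul_two_pi_mul_I (m * K), ← Complex.exp_add]
  congr 1
  rw [hwC]
  push_cast
  linear_combination (2 * π * (a - m + 2 * b * K) * t + 2 * π * b * t ^ 2 * I) * I_sq

theorem sum_IC1_eq_J_general (K : ℕ) (hK : 1 ≤ K) (j : ℕ) (a b : ℝ)
    (hpq : (⌈a⌉ : ℤ) < ⌊a + 2 * b * K⌋) :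
    ∑ m ∈ Finset.Icc (⌈a⌉ : ℤ) (⌊a + 2 * b * K⌋ - 1), IC1 K j (a - (m : ℝ)) b =
      Complex.I * Complex.exp (2 * (Real.pi : ℂ) * Complex.I * (a : ℂ) * (K : ℂ) +
          2 * (Real.pi : ℂ) * Complex.I * (b : ℂ) * (K : ℂ) ^ 2) *
        ∑ l ∈ Finset.range (j + 1), Complex.I ^ l * (j.choose l : ℂ) *
          Jint K l (⌊a + 2 * b * K⌋ - ⌈a⌉) (Int.fract (a + 2 * b * K)) b := by
  set q := ⌊a + 2 * b * K⌋
  set w := Int.fract (a + 2 * b * K)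
  have hw : w + q = a + 2 * b * (K : ℤ) := by
    push_cast; exact Int.fract_add_floor _
  have hsum (t : ℝ) :
      ∑ m ∈ Ico ⌈a⌉ q, (K + I * t) ^ j *
          cexp (2 * π * I * ((a - m : ℝ) : ℂ) * (K + I * t) + 2 * π * I * b * (K + I * t) ^ 2) =
        (K + I * t) ^ j * (cexp (2 * π * I * a * K + 2 * π * I * b * K ^ 2) *
          (cexp (-2 * π * w * t - 2 * π * I * b * t ^ 2) *
            ∑ m ∈ Ico ⌈a⌉ q, cexp (-((q - m) * (2 * π * t))))) := by
    have hphase := fun m => cexp_quadratic_phase_add_I_mul K m q hw t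
    push_cast at hphase ⊢
    simp_rw [hphase, mul_sum]
  set E := cexp (2 * π * I * a * K + 2 * π * I * b * K ^ 2)
  have hK0 : (K : ℂ) ≠ 0 := by exact_mod_cast (by omega : K ≠ 0)
  simp only [IC1]
  rw [Icc_sub_one_right_eq_Ico, ← mul_sum, ← intervalIntegral.integral_finsetSum
    fun m _ => (by fun_prop : Continuous _).intervalIntegrable _ _]
  simp_rw [hsum, mul_left_comm _ E, intervalIntegral.integral_const_mul]
  rw [mul_assoc, mul_left_comm _ E, inv_pow_mul_integral_add_I_mul_pow hK0 j (by fun_prop)]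
  simp_rw [Jint_sub_eq_integral_sum_Ico K _ hpq.le]
  ring

/-- Evaluation of `∑_{m=p}^{q−1} I_{C₁}(K,j;a−m,b)` in terms of `J`-integrals. -/
theorem sum_IC1_eq_J (K : ℕ) (hK : 1 ≤ K) (j : ℕ) (a b : ℝ)
    (ha : a ∈ Set.Ico (0 : ℝ) 1) (hb : 0 < b)
    (hpq : (⌈a⌉ : ℤ) < ⌊a + 2 * b * K⌋) :
    ∑ m ∈ Finset.Icc (⌈a⌉ : ℤ) (⌊a + 2 * b * K⌋ - 1), IC1 K j (a - (m : ℝ)) b =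
      Complex.I * Complex.exp (2 * (Real.pi : ℂ) * Complex.I * (a : ℂ) * (K : ℂ) +
          2 * (Real.pi : ℂ) * Complex.I * (b : ℂ) * (K : ℂ) ^ 2) *
        ∑ l ∈ Finset.range (j + 1), Complex.I ^ l * (j.choose l : ℂ) *
          Jint K l (⌊a + 2 * b * K⌋ - ⌈a⌉) (Int.fract (a + 2 * b * K)) b :=
  sum_IC1_eq_J_general K hK j a b hpq
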